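/- For two distinct topological orderings τ ≠ τ' of a finite DAG, the sets of negative queries they can answer differ: N(τ) ≠ N(τ'), where N(σ) = { (s,t) : s does not reach t and σ(t) < σ(s) }. -/

import Mathlib

/-!
If `N(τ) = N(τ')` and `τ u < τ v`, then `τ' u < τ' v`: otherwise `u` cannot reach `v` (as `τ'` is
a topological ordering), so `(u, v) ∈ N(τ') = N(τ)`, forcing `τ v < τ u`. Hence `τ' ∘ τ⁻¹` is a
strictly monotone bijection of `Fin n`, i.e. the identity.
-/

def negativeQueries {V α : Type*} [LT α] (E : V → V → Prop) (σ : V → α) : Set (V × V) :=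
  {p | ¬ Relation.ReflTransGen E p.1 p.2 ∧ σ p.2 < σ p.1}

theorem Relation.ReflTransGen.apply_le_apply {V α : Type*} [Preorder α] {E : V → V → Prop}
    {σ : V → α} (hσ : ∀ u v, E u v → σ u < σ v) {u v : V} (h : ReflTransGen E u v) :
    σ u ≤ σ v := by
  have h' := h.lift σ fun a b hab => (hσ a b hab).le
  rwa [reflTransGen_eq_self] at h'

theorem lt_imp_lt_of_negativeQueries_subset {V α β : Type*} [Preorder α] [LinearOrder β]
    {E : V → V → Prop} {σ : V → α} {σ' : V → β} (hinj : σ'.Injective)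
    (hσ' : ∀ u v, E u v → σ' u < σ' v) (hsub : negativeQueries E σ' ⊆ negativeQueries E σ)
    {u v : V} (huv : σ u < σ v) :
    σ' u < σ' v := by
  by_contra! hvu
  obtain hvu | hvu := hvu.lt_or_eq
  · have hunreach : ¬ Relation.ReflTransGen E u v := fun h => hvu.not_ge (h.apply_le_apply hσ')
    have hmem : (u, v) ∈ negativeQueries E σ := hsub ⟨hunreach, hvu⟩
    exact hmem.2.not_gt huv
  · exact huv.ne (congrArg σ (hinj hvu)).symm

theorem Equiv.eq_of_lt_imp_lt {α β : Type*} [LinearOrder β] [WellFoundedLT β] (σ σ' : α ≃ β)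
    (h : ∀ u v, σ u < σ v → σ' u < σ' v) : σ = σ' := by
  have hmono : StrictMono (σ' ∘ σ.symm) := fun i j hij => h _ _ (by simpa using hij)
  have hrange : Set.range (σ' ∘ σ.symm) = Set.range id := by
    rw [Set.range_id, ← Equiv.coe_trans, (σ.symm.trans σ').surjective.range_eq]
  have hid := (hmono.range_inj strictMono_id).1 hrange
  exact Equiv.ext fun x => by simpa using (congrFun hid (σ x)).symm

theorem distinct_topological_orderings_answer_different_negative_queries_general
    {V : Type*} [Fintype V] (E : V → V → Prop)
    (τ τ' : V ≃ Fin (Fintype.card V))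
    (hτ' : ∀ u v : V, E u v → τ' u < τ' v)
    (hne : τ ≠ τ') :
    {p : V × V | ¬ Relation.ReflTransGen E p.1 p.2 ∧ τ p.2 < τ p.1} ≠
    {p : V × V | ¬ Relation.ReflTransGen E p.1 p.2 ∧ τ' p.2 < τ' p.1} := by
  intro hset
  have hsub : negativeQueries E τ' ⊆ negativeQueries E τ := hset.symm.subset
  exact hne <| τ.eq_of_lt_imp_lt τ' fun _ _ =>
    lt_imp_lt_of_negativeQueries_subset τ'.injective hτ' hsub

/-- For two distinct topological orderings `τ ≠ τ'` of a finite DAG, the sets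
of negative queries they can answer differ: `N(τ) ≠ N(τ')`, where
`N(σ) = { (s, t) | s does not reach t and σ t < σ s }`. -/
theorem distinct_topological_orderings_answer_different_negative_queries
    {V : Type*} [Fintype V] (E : V → V → Prop)
    (hacyc : ∀ v : V, ¬ Relation.TransGen E v v)
    (τ τ' : V ≃ Fin (Fintype.card V))
    (hτ : ∀ u v : V, E u v → τ u < τ v)
    (hτ' : ∀ u v : V, E u v → τ' u < τ' v)
    (hne : τ ≠ τ') :
    {p : V × V | ¬ Relation.ReflTransGen E p.1 p.2 ∧ τ p.2 < τ p.1} ≠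
    {p : V × V | ¬ Relation.ReflTransGen E p.1 p.2 ∧ τ' p.2 < τ' p.1} :=
  distinct_topological_orderings_answer_different_negative_queries_general E τ τ' hτ' hne
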